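/- arXiv:2103.08770 — 3 statements merged into one kernel-verified Lean document; each statement's English description precedes it below -/
import Mathlib

section
/- Let d ≥ 1 and let t ≠ 0. For every Schwartz function φ : ℝ^d → ℂ and every ξ ∈ ℝ^d, the Fourier transform of e^{itΔ}φ satisfies 𝓕(e^{itΔ}φ)(ξ) = e^{-4π²it|ξ|²} · 𝓕φ(ξ), where 𝓕f(ξ) = ∫_{ℝ^d} e^{-2πi x·ξ} f(x) dx. -/
open MeasureTheory Complex SchwartzMap
open scoped ENNReal NNReal FourierTransform RealInnerProductSpace

set_option maxHeartbeats 1000000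

noncomputable section

/-- The free Schrödinger propagator `e^{itΔ}`:
`(e^{itΔ}φ)(x) = (4πit)^{-d/2} ∫ e^{i|x-y|²/(4t)} φ(y) dy`. -/
def schrod (d : ℕ) (t : ℝ) (φ : EuclideanSpace ℝ (Fin d) → ℂ)
    (x : EuclideanSpace ℝ (Fin d)) : ℂ :=
  (((4 * Real.pi * t : ℝ) : ℂ) * Complex.I) ^ (-(d : ℂ) / 2) *
    ∫ y : EuclideanSpace ℝ (Fin d),
      Complex.exp (Complex.I * ((‖x - y‖ : ℝ) : ℂ) ^ 2 / ((4 * t : ℝ) : ℂ)) * φ y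

variable {E : Type*} [NormedAddCommGroup E] [InnerProductSpace ℝ E]

/-- The continuous linear map `x ↦ (h ↦ c * 2⟪x,h⟫)`. -/
def gaussDerivCLM (c : ℂ) : E →L[ℝ] (E →L[ℝ] ℂ) :=
  c • (2:ℝ) • ((ContinuousLinearMap.compL ℝ E ℝ ℂ Complex.ofRealCLM).comp (innerSL ℝ))

lemma gaussDerivCLM_apply (c : ℂ) (x h : E) :
    gaussDerivCLM c x h = c * (((2:ℝ) * ⟪x, h⟫ : ℝ) : ℂ) := by
  simp only [gaussDerivCLM, ContinuousLinearMap.smul_apply, ContinuousLinearMap.coe_comp',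
    Function.comp_apply, ContinuousLinearMap.compL_apply, Complex.ofRealCLM_apply,
    smul_eq_mul, Complex.real_smul, innerSL_apply_apply]
  push_cast
  ring

lemma hasFDerivAt_cexp_mul_normSq (c : ℂ) (x : E) :
    HasFDerivAt (fun y : E => Complex.exp (c * ((‖y‖ : ℂ))^2))
      (Complex.exp (c * ((‖x‖ : ℂ))^2) • gaussDerivCLM c x) x := by
  have h1 : HasFDerivAt (fun y : E => ‖y‖^2) ((2:ℕ) • (innerSL ℝ) x) x :=
    (hasStrictFDerivAt_norm_sq x).hasFDerivAt
  have h2 : HasFDerivAt (fun y : E => ((‖y‖^2 : ℝ) : ℂ))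
      (Complex.ofRealCLM.comp ((2:ℕ) • (innerSL ℝ) x)) x :=
    Complex.ofRealCLM.hasFDerivAt.comp x h1
  have h3 : HasFDerivAt (fun y : E => c * ((‖y‖^2 : ℝ) : ℂ))
      (c • (Complex.ofRealCLM.comp ((2:ℕ) • (innerSL ℝ) x))) x := h2.const_mul c
  have h4 := h3.cexp
  have e1 : (fun y : E => Complex.exp (c * ((‖y‖^2 : ℝ) : ℂ)))
      = fun y : E => Complex.exp (c * ((‖y‖ : ℂ))^2) := by
    funext y; push_cast; ring_nf
  have e2 : Complex.exp (c * ((‖x‖^2 : ℝ) : ℂ)) = Complex.exp (c * ((‖x‖ : ℂ))^2) := by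
    push_cast; ring_nf
  rw [e1, e2] at h4
  convert h4 using 1
  ext h
  simp only [ContinuousLinearMap.smul_apply]
  rw [gaussDerivCLM_apply]
  simp only [ContinuousLinearMap.smul_apply, ContinuousLinearMap.coe_comp', Function.comp_apply,
    ContinuousLinearMap.coe_smul', Pi.smul_apply, Complex.ofRealCLM_apply, smul_eq_mul,
    Complex.real_smul, nsmul_eq_mul, innerSL_apply_apply, Pi.mul_apply, Pi.ofNat_apply]
  norm_num

lemma contDiff_cexp_mul_normSq (c : ℂ) :
    ContDiff ℝ ((⊤:ℕ∞) : WithTop ℕ∞) (fun y : E => Complex.exp (c * ((‖y‖ : ℂ))^2)) := by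
  have : (fun y : E => Complex.exp (c * ((‖y‖ : ℂ))^2))
      = fun y : E => Complex.exp (c * ((‖y‖^2 : ℝ) : ℂ)) := by
    funext y; push_cast; ring_nf
  rw [this]
  exact Complex.contDiff_exp.comp
    (contDiff_const.mul (Complex.ofRealCLM.contDiff.comp (contDiff_norm_sq ℝ)))

/-- scalar multiplication as a bilinear CLM. -/
def lsmulCC (E : Type*) [NormedAddCommGroup E] [InnerProductSpace ℝ E] :
    ℂ →L[ℝ] (E →L[ℝ] ℂ) →L[ℝ] (E →L[ℝ] ℂ) := ContinuousLinearMap.lsmul ℝ ℂ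

lemma hasTemperateGrowth_cexp_mul_normSq {c : ℂ} (hc : c.re ≤ 0) :
    Function.HasTemperateGrowth (fun y : E => Complex.exp (c * ((‖y‖ : ℂ))^2)) := by
  set m : E → ℂ := fun y => Complex.exp (c * ((‖y‖ : ℂ))^2) with hm
  have hsmooth : ContDiff ℝ ((⊤:ℕ∞) : WithTop ℕ∞) m := contDiff_cexp_mul_normSq c
  have hnorm : ∀ x : E, ‖m x‖ ≤ 1 := by
    intro x
    rw [hm]
    simp only [Complex.norm_exp]
    rw [Real.exp_le_one_iff]
    have : (c * ((‖x‖ : ℂ))^2).re = c.re * ‖x‖^2 := by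
      simp [Complex.mul_re, ← Complex.ofReal_pow]
    rw [this]
    exact mul_nonpos_of_nonpos_of_nonneg hc (by positivity)
  have hfd : fderiv ℝ m = fun y => (lsmulCC E) (m y) (gaussDerivCLM c y) := by
    funext y
    rw [(hasFDerivAt_cexp_mul_normSq c y).fderiv]
    simp only [lsmulCC, ContinuousLinearMap.lsmul_apply]
    rfl
  -- uniform bounds on the derivatives of the CLM `gaussDerivCLM c`
  have key : ∀ n : ℕ, ∃ (k : ℕ) (C : ℝ), 0 ≤ C ∧ ∀ i ≤ n, ∀ x : E,
      ‖iteratedFDeriv ℝ i m x‖ ≤ C * (1 + ‖x‖) ^ k := by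
    intro n
    induction n with
    | zero =>
      refine ⟨0, 1, zero_le_one, ?_⟩
      intro i hi x
      interval_cases i
      simpa [norm_iteratedFDeriv_zero] using hnorm x
    | succ n ih =>
      obtain ⟨k, C, hC, hbound⟩ := ih
      obtain ⟨kA, CA, hCA, hAb⟩ :=
        Function.HasTemperateGrowth.norm_iteratedFDeriv_le_uniform (gaussDerivCLM c (E := E)).hasTemperateGrowth n
      refine ⟨k + kA, max C ((2:ℝ)^n * C * CA),
        le_max_of_le_left hC, ?_⟩
      intro i hi x
      have hone : (1:ℝ) ≤ 1 + ‖x‖ := by simp [norm_nonneg]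
      rcases Nat.lt_succ_iff_lt_or_eq.mp (Nat.lt_succ_of_le hi) with h | rfl
      · calc ‖iteratedFDeriv ℝ i m x‖ ≤ C * (1 + ‖x‖) ^ k :=
              hbound i (Nat.lt_succ_iff.mp h) x
          _ ≤ max C ((2:ℝ)^n * C * CA) *
                (1 + ‖x‖) ^ (k + kA) := by
              apply mul_le_mul (le_max_left _ _)
                (pow_le_pow_right₀ hone (Nat.le_add_right k kA)) (by positivity)
                (le_trans hC (le_max_left _ _))
      · have hmc : ContDiff ℝ ((⊤:ℕ∞) : WithTop ℕ∞) m := hsmooth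
        have hAc : ContDiff ℝ ((⊤:ℕ∞) : WithTop ℕ∞) (fun y : E => gaussDerivCLM c y) :=
          (gaussDerivCLM c).contDiff
        have h0 : ‖iteratedFDeriv ℝ (n+1) m x‖ = ‖iteratedFDeriv ℝ n (fderiv ℝ m) x‖ :=
          (norm_iteratedFDeriv_fderiv).symm
        rw [h0, hfd]
        have hb := ContinuousLinearMap.norm_iteratedFDeriv_le_of_bilinear_of_le_one
          (lsmulCC E) hmc hAc x (n := n) (mod_cast le_top)
          ContinuousLinearMap.opNorm_lsmul_le
        refine hb.trans ?_
        have hsum : ∑ i ∈ Finset.range (n+1), (n.choose i : ℝ) *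
              ‖iteratedFDeriv ℝ i m x‖ * ‖iteratedFDeriv ℝ (n-i) (fun y : E => gaussDerivCLM c y) x‖
            ≤ ∑ i ∈ Finset.range (n+1), (n.choose i : ℝ) *
              ((C * (1 + ‖x‖) ^ k) * (CA * (1 + ‖x‖) ^ kA)) := by
          apply Finset.sum_le_sum
          intro i hi2
          have hi3 : i ≤ n := Nat.lt_succ_iff.mp (Finset.mem_range.mp hi2)
          rw [mul_assoc]
          apply mul_le_mul_of_nonneg_left _ (by positivity)
          exact mul_le_mul (hbound i hi3 x) (hAb (n-i) (Nat.sub_le n i) x)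
            (norm_nonneg _) (by positivity)
        refine hsum.trans ?_
        rw [← Finset.sum_mul]
        have h2n : ∑ i ∈ Finset.range (n+1), (n.choose i : ℝ) = (2:ℝ)^n := by
          rw [← Nat.cast_sum, Nat.sum_range_choose]
          push_cast; ring
        rw [h2n]
        have : (2:ℝ)^n * ((C * (1 + ‖x‖) ^ k) * (CA * (1 + ‖x‖) ^ kA))
            = ((2:ℝ)^n * C * CA) * (1 + ‖x‖) ^ (k + kA) := by ring
        rw [this]
        exact mul_le_mul_of_nonneg_right (le_max_right _ _) (by positivity)
  refine ⟨hsmooth, fun n => ?_⟩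
  obtain ⟨k, C, _, h⟩ := key n
  exact ⟨k, C, fun x => h n le_rfl x⟩


lemma norm_cexp_le_one {z : ℂ} (hz : z.re ≤ 0) : ‖Complex.exp z‖ ≤ 1 := by
  rw [Complex.norm_exp, Real.exp_le_one_iff]
  exact hz

lemma norm_cexp_real_mul_I (r : ℝ) : ‖Complex.exp ((r : ℂ) * Complex.I)‖ = 1 := by
  rw [Complex.norm_exp]
  simp

lemma schrod_key (d : ℕ) (t : ℝ) (ht : t ≠ 0)
    (φ : SchwartzMap (EuclideanSpace ℝ (Fin d)) ℂ) (x : EuclideanSpace ℝ (Fin d)) :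
    schrod d t ⇑φ x =
      ∫ ξ : EuclideanSpace ℝ (Fin d),
        Complex.exp (((2 * Real.pi * ⟪ξ, x⟫ : ℝ) : ℂ) * Complex.I) *
          (Complex.exp ((-4 * (Real.pi : ℂ) ^ 2 * Complex.I * (t : ℂ)) * ((‖ξ‖ : ℝ) : ℂ) ^ 2) *
            𝓕 (⇑φ) ξ) := by
  set σ : ℝ → ℂ := fun ε => (ε : ℂ) + (t : ℂ) * Complex.I with hσ
  have hσre : ∀ ε : ℝ, (σ ε).re = ε := by intro ε; simp [hσ]
  have hσne : ∀ ε : ℝ, σ ε ≠ 0 := by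
    intro ε h
    have : (σ ε).im = t := by simp [hσ]
    rw [h] at this
    simp at this
    exact ht this.symm
  have hπ : (Real.pi : ℂ) ≠ 0 := by
    simpa using Real.pi_ne_zero
  set L : ℝ → ℂ := fun ε => (4 * (Real.pi : ℂ) * σ ε) ^ (-(d : ℂ) / 2) *
    ∫ y : EuclideanSpace ℝ (Fin d), Complex.exp (-((‖x - y‖ : ℝ) : ℂ) ^ 2 / (4 * σ ε)) * φ y with hL
  set R : ℝ → ℂ := fun ε => ∫ ξ : EuclideanSpace ℝ (Fin d),
      Complex.exp (((2 * Real.pi * ⟪ξ, x⟫ : ℝ) : ℂ) * Complex.I) *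
        (Complex.exp (-4 * (Real.pi : ℂ) ^ 2 * σ ε * ((‖ξ‖ : ℝ) : ℂ) ^ 2) * 𝓕 (⇑φ) ξ) with hR
  have step1 : ∀ ε : ℝ, 0 < ε → R ε = L ε := by
    intro ε hε
    set s : ℂ := σ ε with hs
    have hsre2 : s.re = ε := hσre ε
    have hsne : s ≠ 0 := hσne ε
    set b : ℂ := ((4 * Real.pi ^ 2 : ℝ) : ℂ) * s with hbdef
    have hbre : 0 < b.re := by
      rw [hbdef, Complex.re_ofReal_mul, hsre2]
      positivity
    have hGi : Integrable
        (fun ξ : EuclideanSpace ℝ (Fin d) => Complex.exp (-b * ((‖ξ‖ : ℝ) : ℂ) ^ 2)) volume := by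
      have h := GaussianFourier.integrable_cexp_neg_mul_sq_norm_add
        (V := EuclideanSpace ℝ (Fin d)) hbre 0 0
      refine h.congr (Filter.Eventually.of_forall (fun v => ?_))
      push_cast
      ring_nf
    set F : EuclideanSpace ℝ (Fin d) → EuclideanSpace ℝ (Fin d) → ℂ := fun ξ y =>
      Complex.exp (((2 * Real.pi * ⟪ξ, x⟫ : ℝ) : ℂ) * Complex.I) *
        (Complex.exp (-4 * (Real.pi : ℂ) ^ 2 * s * ((‖ξ‖ : ℝ) : ℂ) ^ 2) *
          (Complex.exp (((-2 * Real.pi * ⟪y, ξ⟫ : ℝ) : ℂ) * Complex.I) * φ y)) with hF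
    have hFc : Continuous (Function.uncurry F) := by
      rw [hF, Function.uncurry_def]
      have c_in1 : Continuous fun p : EuclideanSpace ℝ (Fin d) × EuclideanSpace ℝ (Fin d) =>
          (inner ℝ p.1 x : ℝ) := continuous_fst.inner continuous_const
      have c_in2 : Continuous fun p : EuclideanSpace ℝ (Fin d) × EuclideanSpace ℝ (Fin d) =>
          (inner ℝ p.2 p.1 : ℝ) := continuous_snd.inner continuous_fst
      refine Continuous.mul ?_ (Continuous.mul ?_
        (Continuous.mul ?_ (φ.continuous.comp continuous_snd)))
      · exact Complex.continuous_exp.comp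
          ((Complex.continuous_ofReal.comp (continuous_const.mul c_in1)).mul continuous_const)
      · exact Complex.continuous_exp.comp
          (continuous_const.mul ((Complex.continuous_ofReal.comp continuous_fst.norm).pow 2))
      · exact Complex.continuous_exp.comp
          ((Complex.continuous_ofReal.comp (continuous_const.mul c_in2)).mul continuous_const)
    have hFint : Integrable (Function.uncurry F) (volume.prod volume) := by
      refine ((hGi.norm).mul_prod (φ.integrable.norm)).mono' hFc.aestronglyMeasurable
        (Filter.Eventually.of_forall (fun p => ?_))
      have hexpeq : -4 * (Real.pi : ℂ) ^ 2 * s * ((‖p.1‖ : ℝ) : ℂ) ^ 2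
          = -b * ((‖p.1‖ : ℝ) : ℂ) ^ 2 := by rw [hbdef]; push_cast; ring
      rw [Function.uncurry_def, hF]
      simp only
      rw [norm_mul, norm_mul, norm_mul, hexpeq, norm_cexp_real_mul_I, norm_cexp_real_mul_I,
        one_mul, one_mul]
    have hinner : ∀ y : EuclideanSpace ℝ (Fin d),
        (∫ ξ : EuclideanSpace ℝ (Fin d), F ξ y) =
          ((4 * (Real.pi : ℂ) * s) ^ (-(d : ℂ) / 2) *
            Complex.exp (-((‖x - y‖ : ℝ) : ℂ) ^ 2 / (4 * s))) * φ y := by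
      intro y
      have h1 : ∀ ξ : EuclideanSpace ℝ (Fin d), F ξ y =
          Complex.exp (-b * ((‖ξ‖ : ℝ) : ℂ) ^ 2 +
            (2 * (Real.pi : ℂ) * Complex.I) * ((⟪x - y, ξ⟫ : ℝ) : ℂ)) * φ y := by
        intro ξ
        rw [hF]
        simp only
        calc Complex.exp (((2 * Real.pi * ⟪ξ, x⟫ : ℝ) : ℂ) * Complex.I) *
              (Complex.exp (-4 * (Real.pi : ℂ) ^ 2 * s * ((‖ξ‖ : ℝ) : ℂ) ^ 2) *
                (Complex.exp (((-2 * Real.pi * ⟪y, ξ⟫ : ℝ) : ℂ) * Complex.I) * φ y))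
            = Complex.exp (((2 * Real.pi * ⟪ξ, x⟫ : ℝ) : ℂ) * Complex.I) *
                Complex.exp (-4 * (Real.pi : ℂ) ^ 2 * s * ((‖ξ‖ : ℝ) : ℂ) ^ 2) *
                Complex.exp (((-2 * Real.pi * ⟪y, ξ⟫ : ℝ) : ℂ) * Complex.I) * φ y := by ring
          _ = Complex.exp ((((2 * Real.pi * ⟪ξ, x⟫ : ℝ) : ℂ) * Complex.I +
                -4 * (Real.pi : ℂ) ^ 2 * s * ((‖ξ‖ : ℝ) : ℂ) ^ 2) +
                ((-2 * Real.pi * ⟪y, ξ⟫ : ℝ) : ℂ) * Complex.I) * φ y := by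
              rw [← Complex.exp_add, ← Complex.exp_add]
          _ = Complex.exp (-b * ((‖ξ‖ : ℝ) : ℂ) ^ 2 +
                (2 * (Real.pi : ℂ) * Complex.I) * ((⟪x - y, ξ⟫ : ℝ) : ℂ)) * φ y := by
              congr 1
              rw [hbdef]
              push_cast [inner_sub_left]
              rw [real_inner_comm ξ x]
              ring
      rw [MeasureTheory.integral_congr_ae (Filter.Eventually.of_forall h1),
        MeasureTheory.integral_mul_const,
        GaussianFourier.integral_cexp_neg_mul_sq_norm_add hbre
          (2 * (Real.pi : ℂ) * Complex.I) (x - y)]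
      have hbne : b ≠ 0 := by
        rw [hbdef]
        exact mul_ne_zero (Complex.ofReal_ne_zero.mpr (by positivity)) hsne
      congr 1
      congr 1
      · rw [finrank_euclideanSpace_fin]
        have h2 : (Real.pi : ℂ) / b = (4 * (Real.pi : ℂ) * s)⁻¹ := by
          rw [hbdef]
          field_simp
          push_cast
          ring
        have harg : (4 * (Real.pi : ℂ) * s).arg ≠ Real.pi := by
          intro h
          rw [Complex.arg_eq_pi_iff] at h
          have hre : (4 * (Real.pi : ℂ) * s).re = 4 * Real.pi * ε := by
            have h3 : (4 * (Real.pi : ℂ) * s) = ((4 * Real.pi : ℝ) : ℂ) * s := by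
              push_cast; ring
            rw [h3, Complex.re_ofReal_mul, hsre2]
          rw [hre] at h
          nlinarith [Real.pi_pos, hε, h.1]
        rw [h2, Complex.inv_cpow _ _ harg, ← Complex.cpow_neg, neg_div]
      · congr 1
        rw [div_eq_div_iff (mul_ne_zero (by norm_num : (4:ℂ) ≠ 0) hbne)
          (mul_ne_zero (by norm_num : (4:ℂ) ≠ 0) hsne)]
        rw [hbdef]
        push_cast
        linear_combination (16 * (Real.pi : ℂ) ^ 2 * s * ((‖x - y‖ : ℝ) : ℂ) ^ 2) * Complex.I_sq
    calc R ε = ∫ ξ : EuclideanSpace ℝ (Fin d), ∫ y : EuclideanSpace ℝ (Fin d), F ξ y := by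
          rw [hR]
          refine MeasureTheory.integral_congr_ae (Filter.Eventually.of_forall (fun ξ => ?_))
          beta_reduce
          rw [Real.fourier_eq']
          simp_rw [smul_eq_mul]
          rw [← MeasureTheory.integral_const_mul, ← MeasureTheory.integral_const_mul]
      _ = ∫ y : EuclideanSpace ℝ (Fin d), ∫ ξ : EuclideanSpace ℝ (Fin d), F ξ y :=
          MeasureTheory.integral_integral_swap hFint
      _ = ∫ y : EuclideanSpace ℝ (Fin d),
            ((4 * (Real.pi : ℂ) * s) ^ (-(d : ℂ) / 2) *
              Complex.exp (-((‖x - y‖ : ℝ) : ℂ) ^ 2 / (4 * s))) * φ y :=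
          MeasureTheory.integral_congr_ae (Filter.Eventually.of_forall hinner)
      _ = L ε := by
          simp only [hL, ← hs]
          simp_rw [mul_assoc]
          rw [MeasureTheory.integral_const_mul]
  have h4t : (4 : ℝ) * t ≠ 0 := mul_ne_zero (by norm_num) ht
  have hs0 : σ 0 = (t : ℂ) * Complex.I := by simp [hσ]
  have step2 : Filter.Tendsto L (nhdsWithin 0 (Set.Ioi 0)) (nhds (schrod d t ⇑φ x)) := by
    have hA : Filter.Tendsto (fun ε : ℝ => (4 * (Real.pi : ℂ) * σ ε) ^ (-(d : ℂ) / 2))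
        (nhdsWithin 0 (Set.Ioi 0))
        (nhds ((((4 * Real.pi * t : ℝ) : ℂ) * Complex.I) ^ (-(d : ℂ) / 2))) := by
      have hplane : ((4 * Real.pi * t : ℝ) : ℂ) * Complex.I ∈ Complex.slitPlane := by
        rw [Complex.mem_slitPlane_iff]
        right
        simp only [Complex.mul_im, Complex.ofReal_re, Complex.I_im, Complex.ofReal_im,
          Complex.I_re, mul_zero, mul_one, zero_mul, add_zero]
        exact mul_ne_zero (mul_ne_zero (by norm_num) Real.pi_ne_zero) ht
      have hcont : ContinuousAt (fun z : ℂ => z ^ (-(d : ℂ) / 2))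
          (((4 * Real.pi * t : ℝ) : ℂ) * Complex.I) := continuousAt_cpow_const hplane
      have hbase : Filter.Tendsto (fun ε : ℝ => 4 * (Real.pi : ℂ) * σ ε)
          (nhdsWithin 0 (Set.Ioi 0)) (nhds (((4 * Real.pi * t : ℝ) : ℂ) * Complex.I)) := by
        have hc : Continuous (fun ε : ℝ => 4 * (Real.pi : ℂ) * σ ε) := by
          rw [hσ]; fun_prop
        have h0 : 4 * (Real.pi : ℂ) * σ 0 = ((4 * Real.pi * t : ℝ) : ℂ) * Complex.I := by
          rw [hs0]; push_cast; ring
        exact h0 ▸ ((hc.tendsto 0).mono_left nhdsWithin_le_nhds)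
      exact hcont.tendsto.comp hbase
    have hB : Filter.Tendsto (fun ε : ℝ => ∫ y : EuclideanSpace ℝ (Fin d),
          Complex.exp (-((‖x - y‖ : ℝ) : ℂ) ^ 2 / (4 * σ ε)) * φ y)
        (nhdsWithin 0 (Set.Ioi 0))
        (nhds (∫ y : EuclideanSpace ℝ (Fin d),
          Complex.exp (Complex.I * ((‖x - y‖ : ℝ) : ℂ) ^ 2 / ((4 * t : ℝ) : ℂ)) * φ y)) := by
      apply tendsto_integral_filter_of_dominated_convergence (fun y => ‖φ y‖)
      · refine Filter.Eventually.of_forall (fun ε => ?_)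
        apply Continuous.aestronglyMeasurable
        apply Continuous.mul _ φ.continuous
        apply Complex.continuous_exp.comp
        fun_prop
      · filter_upwards [self_mem_nhdsWithin] with ε hε
        refine Filter.Eventually.of_forall (fun y => ?_)
        rw [norm_mul]
        refine (mul_le_mul_of_nonneg_right (norm_cexp_le_one ?_) (norm_nonneg _)).trans
          (by rw [one_mul])
        have hrw : -((‖x - y‖ : ℝ) : ℂ) ^ 2 / (4 * σ ε)
            = ((-(‖x - y‖ ^ 2) : ℝ) : ℂ) * (4 * σ ε)⁻¹ := by push_cast; ring
        rw [hrw, Complex.re_ofReal_mul]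
        apply mul_nonpos_of_nonpos_of_nonneg (neg_nonpos.mpr (by positivity))
        rw [Complex.inv_re]
        apply div_nonneg _ (Complex.normSq_nonneg _)
        have : (4 * σ ε).re = 4 * ε := by
          rw [hσ]; simp
        rw [this]
        have := Set.mem_Ioi.mp hε
        linarith
      · exact φ.integrable.norm
      · refine Filter.Eventually.of_forall (fun y => ?_)
        apply Filter.Tendsto.mul _ tendsto_const_nhds
        have hc : ContinuousAt
            (fun ε : ℝ => Complex.exp (-((‖x - y‖ : ℝ) : ℂ) ^ 2 / (4 * σ ε))) 0 := by
          apply Complex.continuous_exp.continuousAt.comp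
          apply ContinuousAt.div continuousAt_const
          · rw [hσ]; fun_prop
          · exact mul_ne_zero (by norm_num) (hσne 0)
        have h0 : Complex.exp (-((‖x - y‖ : ℝ) : ℂ) ^ 2 / (4 * σ 0))
            = Complex.exp (Complex.I * ((‖x - y‖ : ℝ) : ℂ) ^ 2 / ((4 * t : ℝ) : ℂ)) := by
          congr 1
          rw [hs0, div_eq_div_iff (mul_ne_zero (by norm_num) ?_) ?_]
          · push_cast
            linear_combination (-4 * (t : ℂ) * ((‖x - y‖ : ℝ) : ℂ) ^ 2) * Complex.I_sq
          · exact mul_ne_zero (Complex.ofReal_ne_zero.mpr ht) Complex.I_ne_zero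
          · exact Complex.ofReal_ne_zero.mpr h4t
        exact h0 ▸ (hc.tendsto.mono_left nhdsWithin_le_nhds)
    exact hA.mul hB
  have step3 : Filter.Tendsto R (nhdsWithin 0 (Set.Ioi 0))
      (nhds (∫ ξ : EuclideanSpace ℝ (Fin d),
        Complex.exp (((2 * Real.pi * ⟪ξ, x⟫ : ℝ) : ℂ) * Complex.I) *
          (Complex.exp ((-4 * (Real.pi : ℂ) ^ 2 * Complex.I * (t : ℂ)) * ((‖ξ‖ : ℝ) : ℂ) ^ 2) *
            𝓕 (⇑φ) ξ))) := by
    have hFTi : Integrable (𝓕 (⇑φ)) volume :=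
      (SchwartzMap.fourierTransformCLM ℝ φ).integrable (μ := volume)
    have hFTc : Continuous (𝓕 (⇑φ)) := (SchwartzMap.fourierTransformCLM ℝ φ).continuous
    rw [hR]
    apply tendsto_integral_filter_of_dominated_convergence (fun ξ => ‖𝓕 (⇑φ) ξ‖)
    · refine Filter.Eventually.of_forall (fun ε => ?_)
      apply Continuous.aestronglyMeasurable
      apply Continuous.mul
      · apply Complex.continuous_exp.comp
        have hinner : Continuous fun ξ : EuclideanSpace ℝ (Fin d) => (inner ℝ ξ x : ℝ) :=
          continuous_id.inner continuous_const
        exact (Complex.continuous_ofReal.comp (continuous_const.mul hinner)).mul continuous_const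
      apply Continuous.mul _ hFTc
      apply Complex.continuous_exp.comp
      rw [hσ]
      fun_prop
    · filter_upwards [self_mem_nhdsWithin] with ε hε
      refine Filter.Eventually.of_forall (fun ξ => ?_)
      rw [norm_mul, norm_mul, norm_cexp_real_mul_I, one_mul]
      refine (mul_le_mul_of_nonneg_right (norm_cexp_le_one ?_) (norm_nonneg _)).trans
        (by rw [one_mul])
      have hrw : -4 * (Real.pi : ℂ) ^ 2 * σ ε * ((‖ξ‖ : ℝ) : ℂ) ^ 2
          = ((-(4 * Real.pi ^ 2 * ‖ξ‖ ^ 2) : ℝ) : ℂ) * σ ε := by push_cast; ring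
      rw [hrw, Complex.re_ofReal_mul]
      apply mul_nonpos_of_nonpos_of_nonneg (neg_nonpos.mpr (by positivity))
      rw [hσre ε]
      exact (Set.mem_Ioi.mp hε).le
    · exact hFTi.norm
    · refine Filter.Eventually.of_forall (fun ξ => ?_)
      refine Filter.Tendsto.mul tendsto_const_nhds (Filter.Tendsto.mul ?_ tendsto_const_nhds)
      have hc : ContinuousAt
          (fun ε : ℝ => Complex.exp (-4 * (Real.pi : ℂ) ^ 2 * σ ε * ((‖ξ‖ : ℝ) : ℂ) ^ 2)) 0 := by
        apply Complex.continuous_exp.continuousAt.comp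
        rw [hσ]
        fun_prop
      have h0 : Complex.exp (-4 * (Real.pi : ℂ) ^ 2 * σ 0 * ((‖ξ‖ : ℝ) : ℂ) ^ 2)
          = Complex.exp ((-4 * (Real.pi : ℂ) ^ 2 * Complex.I * (t : ℂ)) * ((‖ξ‖ : ℝ) : ℂ) ^ 2) := by
        rw [hs0]
        congr 1
        ring
      exact h0 ▸ (hc.tendsto.mono_left nhdsWithin_le_nhds)
  have step2' : Filter.Tendsto R (nhdsWithin 0 (Set.Ioi 0)) (nhds (schrod d t ⇑φ x)) := by
    refine step2.congr' ?_
    filter_upwards [self_mem_nhdsWithin] with ε hε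
    exact (step1 ε hε).symm
  exact tendsto_nhds_unique step2' step3

/-- **Fourier multiplier formula for the free propagator.** For `d ≥ 1`, `t ≠ 0`, Schwartz
`φ` and `ξ ∈ ℝ^d`, `𝓕(e^{itΔ}φ)(ξ) = e^{-4π²it|ξ|²} 𝓕φ(ξ)`, where
`𝓕f(ξ) = ∫ e^{-2πi x·ξ} f(x) dx`. -/
theorem propagator_fourier (d : ℕ) (hd : 1 ≤ d) (t : ℝ) (ht : t ≠ 0)
    (φ : SchwartzMap (EuclideanSpace ℝ (Fin d)) ℂ) (ξ : EuclideanSpace ℝ (Fin d)) :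
    𝓕 (schrod d t ⇑φ) ξ =
      Complex.exp (-4 * (Real.pi : ℂ) ^ 2 * Complex.I * (t : ℂ) * ((‖ξ‖ : ℝ) : ℂ) ^ 2) *
        𝓕 (⇑φ) ξ := by
  have hm : Function.HasTemperateGrowth
      (fun η : EuclideanSpace ℝ (Fin d) =>
        Complex.exp ((-4 * (Real.pi : ℂ) ^ 2 * Complex.I * (t : ℂ)) * ((‖η‖ : ℝ) : ℂ) ^ 2)) := by
    apply hasTemperateGrowth_cexp_mul_normSq
    have : (-4 * (Real.pi : ℂ) ^ 2 * Complex.I * (t : ℂ))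
        = ((-4 * Real.pi ^ 2 * t : ℝ) : ℂ) * Complex.I := by push_cast; ring
    rw [this, Complex.re_ofReal_mul]
    simp
  set ψ : SchwartzMap (EuclideanSpace ℝ (Fin d)) ℂ :=
    SchwartzMap.bilinLeftCLM (ContinuousLinearMap.mul ℝ ℂ) hm
      (SchwartzMap.fourierTransformCLM ℝ φ) with hψdef
  have hψ : ∀ η, ψ η = 𝓕 (⇑φ) η *
      Complex.exp ((-4 * (Real.pi : ℂ) ^ 2 * Complex.I * (t : ℂ)) * ((‖η‖ : ℝ) : ℂ) ^ 2) :=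
    fun η => rfl
  have h1 : schrod d t ⇑φ = ⇑((FourierTransform.fourierCLE ℝ (SchwartzMap (EuclideanSpace ℝ (Fin d)) ℂ)).symm ψ) := by
    funext z
    rw [schrod_key d t ht φ z, FourierTransform.fourierCLE_symm_apply,
      SchwartzMap.fourierInv_coe, Real.fourierInv_eq']
    refine MeasureTheory.integral_congr_ae (Filter.Eventually.of_forall (fun η => ?_))
    beta_reduce
    rw [smul_eq_mul, hψ η]
    ring
  calc 𝓕 (schrod d t ⇑φ) ξ
      = 𝓕 (⇑((FourierTransform.fourierCLE ℝ (SchwartzMap (EuclideanSpace ℝ (Fin d)) ℂ)).symm ψ)) ξ := by rw [h1]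
    _ = ψ ξ := by
        rw [← SchwartzMap.fourier_coe, ← FourierTransform.fourierCLE_apply (R := ℝ),
          (FourierTransform.fourierCLE ℝ (SchwartzMap (EuclideanSpace ℝ (Fin d)) ℂ)).apply_symm_apply]
    _ = _ := by rw [hψ ξ, mul_comm]
end
end

section
/- Let d ≥ 1, let t ≠ 0 be real, and let φ : ℝ^d → ℂ be a Schwartz function. Then e^{itΔ}φ is differentiable on ℝ^d, and for every j ∈ {1,…,d} and every x ∈ ℝ^d, (e^{itΔ}(x_j φ))(x) = x_j (e^{itΔ}φ)(x) + 2it ∂_{x_j}(e^{itΔ}φ)(x); that is, e^{itΔ} x e^{-itΔ} = J(t) = x + 2it∇ on the range of the propagator applied to Schwartz functions. -/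
open MeasureTheory Complex
open scoped ENNReal NNReal FourierTransform

noncomputable section

namespace SchrodAux

variable {d : ℕ}

/-- `z ↦ (v ↦ (⟪z, v⟫_ℝ : ℂ))`. -/
def M (d : ℕ) : EuclideanSpace ℝ (Fin d) →L[ℝ] (EuclideanSpace ℝ (Fin d) →L[ℝ] ℂ) :=
  (ContinuousLinearMap.compL ℝ (EuclideanSpace ℝ (Fin d)) ℝ ℂ Complex.ofRealCLM).comp
    (innerSL ℝ)

lemma M_apply (z v : EuclideanSpace ℝ (Fin d)) :
    M d z v = ((inner ℝ z v : ℝ) : ℂ) := rfl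

lemma norm_M_le (z : EuclideanSpace ℝ (Fin d)) : ‖M d z‖ ≤ ‖z‖ := by
  refine ContinuousLinearMap.opNorm_le_bound _ (norm_nonneg z) fun v => ?_
  rw [M_apply, Complex.norm_real, Real.norm_eq_abs]
  exact abs_real_inner_le_norm z v

/-- The phase kernel. -/
def K (t : ℝ) (x y : EuclideanSpace ℝ (Fin d)) : ℂ :=
  Complex.exp (Complex.I * ((‖x - y‖ : ℝ) : ℂ) ^ 2 / ((4 * t : ℝ) : ℂ))

lemma K_eq (t : ℝ) (x y : EuclideanSpace ℝ (Fin d)) :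
    K t x y = Complex.exp
      (Complex.I / ((4 * t : ℝ) : ℂ) * ((‖x - y‖ ^ 2 : ℝ) : ℂ)) := by
  rw [K]; congr 1; push_cast; ring

lemma norm_K (t : ℝ) (x y : EuclideanSpace ℝ (Fin d)) : ‖K t x y‖ = 1 := by
  rw [show K t x y =
      Complex.exp (((‖x - y‖ ^ 2 / (4 * t) : ℝ) : ℂ) * Complex.I) by
    rw [K]; congr 1; push_cast; ring]
  exact Complex.norm_exp_ofReal_mul_I _

lemma K_continuous (t : ℝ) (x : EuclideanSpace ℝ (Fin d)) :
    Continuous fun y => K t x y := by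
  apply Complex.continuous_exp.comp
  exact (continuous_const.mul ((Complex.continuous_ofReal.comp
    ((continuous_const.sub continuous_id).norm)).pow 2)).div_const _

/-- The `x`-derivative of `K t x y * φ y`. -/
def F' (t : ℝ) (φ : EuclideanSpace ℝ (Fin d) → ℂ) (x y : EuclideanSpace ℝ (Fin d)) :
    EuclideanSpace ℝ (Fin d) →L[ℝ] ℂ :=
  (Complex.I / (2 * (t : ℂ)) * K t x y * φ y) • M d (x - y)

lemma hasFDerivAt_F (t : ℝ) (ht : t ≠ 0) (φ : EuclideanSpace ℝ (Fin d) → ℂ)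
    (y x : EuclideanSpace ℝ (Fin d)) :
    HasFDerivAt (fun x => K t x y * φ y) (F' t φ x y) x := by
  have h1 : HasFDerivAt (fun x : EuclideanSpace ℝ (Fin d) => ‖x - y‖ ^ 2)
      (2 • (innerSL ℝ (x - y)).comp (ContinuousLinearMap.id ℝ _)) x := by
    simpa using ((hasFDerivAt_id x).sub_const y).norm_sq
  have h2 := (Complex.ofRealCLM.hasFDerivAt.comp x h1).const_mul
    (Complex.I / ((4 * t : ℝ) : ℂ))
  have h3 := h2.cexp.mul_const (φ y)
  have hfun : (fun x : EuclideanSpace ℝ (Fin d) => K t x y * φ y) =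
      (fun x => Complex.exp (Complex.I / ((4 * t : ℝ) : ℂ) *
        Complex.ofRealCLM ((fun x : EuclideanSpace ℝ (Fin d) => ‖x - y‖ ^ 2) x)) * φ y) := by
    funext z; rw [K_eq]; rfl
  rw [hfun]
  refine h3.congr_fderiv ?_
  ext v
  have h4 : ((4 * t : ℝ) : ℂ) ≠ 0 := by
    simp only [Complex.ofReal_ne_zero]; positivity
  have h2t : (2 * (t : ℂ)) ≠ 0 := by
    simp [Complex.ofReal_ne_zero, ht]
  simp only [F', ContinuousLinearMap.smul_apply, M_apply,
    ContinuousLinearMap.coe_smul', Pi.smul_apply, ContinuousLinearMap.coe_comp',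
    Function.comp_apply, ContinuousLinearMap.coe_id', id_eq, innerSL_apply_apply,
    Complex.ofRealCLM_apply, K_eq, smul_eq_mul]
  push_cast
  have ht' : (t : ℂ) ≠ 0 := Complex.ofReal_ne_zero.mpr ht
  field_simp
  ring

lemma bound_integrable (t : ℝ) (φ : SchwartzMap (EuclideanSpace ℝ (Fin d)) ℂ)
    (x₀ : EuclideanSpace ℝ (Fin d)) :
    Integrable (fun y : EuclideanSpace ℝ (Fin d) =>
      (1 / (2 * |t|)) * ((1 + ‖x₀‖) * ‖φ y‖ + ‖y‖ * ‖φ y‖)) := by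
  apply Integrable.const_mul
  exact (φ.integrable.norm.const_mul _).add
    (by simpa using φ.integrable_pow_mul volume 1)

lemma F'_bound (t : ℝ) (φ : SchwartzMap (EuclideanSpace ℝ (Fin d)) ℂ)
    (x₀ : EuclideanSpace ℝ (Fin d)) (y : EuclideanSpace ℝ (Fin d))
    (x : EuclideanSpace ℝ (Fin d)) (hx : x ∈ Metric.ball x₀ 1) :
    ‖F' t (⇑φ) x y‖ ≤ (1 / (2 * |t|)) * ((1 + ‖x₀‖) * ‖φ y‖ + ‖y‖ * ‖φ y‖) := by
  have hsc : ‖Complex.I / (2 * (t : ℂ)) * K t x y * φ y‖ = (1 / (2 * |t|)) * ‖φ y‖ := by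
    rw [norm_mul, norm_mul, norm_K, norm_div, Complex.norm_I]
    simp [Complex.norm_real, Real.norm_eq_abs, abs_mul]
  have hxy : ‖x - y‖ ≤ (1 + ‖x₀‖) + ‖y‖ := by
    have h1 : ‖x - y‖ ≤ ‖x - x₀‖ + ‖x₀ - y‖ := norm_sub_le_norm_sub_add_norm_sub x x₀ y
    have h2 : ‖x - x₀‖ ≤ 1 := le_of_lt (by simpa [dist_eq_norm] using hx)
    have h3 : ‖x₀ - y‖ ≤ ‖x₀‖ + ‖y‖ := norm_sub_le x₀ y
    linarith
  calc ‖F' t (⇑φ) x y‖ = ‖Complex.I / (2 * (t : ℂ)) * K t x y * φ y‖ * ‖M d (x - y)‖ := by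
        rw [F']
        exact norm_smul (Complex.I / (2 * (t : ℂ)) * K t x y * φ y) (M d (x - y))
    _ ≤ ((1 / (2 * |t|)) * ‖φ y‖) * ((1 + ‖x₀‖) + ‖y‖) := by
        rw [hsc]
        exact mul_le_mul_of_nonneg_left ((norm_M_le _).trans hxy)
          (by positivity)
    _ = (1 / (2 * |t|)) * ((1 + ‖x₀‖) * ‖φ y‖ + ‖y‖ * ‖φ y‖) := by ring

lemma F'_continuous (t : ℝ) (φ : SchwartzMap (EuclideanSpace ℝ (Fin d)) ℂ)
    (x : EuclideanSpace ℝ (Fin d)) :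
    Continuous fun y => F' t (⇑φ) x y := by
  apply Continuous.smul (f := fun y => Complex.I / (2 * (t : ℂ)) * K t x y * φ y)
    (g := fun y => M d (x - y))
  · exact ((continuous_const.mul (K_continuous t x)).mul φ.continuous)
  · exact (M d).continuous.comp (continuous_const.sub continuous_id)

lemma F'_integrable (t : ℝ) (φ : SchwartzMap (EuclideanSpace ℝ (Fin d)) ℂ)
    (x : EuclideanSpace ℝ (Fin d)) :
    Integrable (fun y => F' t (⇑φ) x y) := by
  refine (bound_integrable t φ x).mono' (F'_continuous t φ x).aestronglyMeasurable ?_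
  exact Filter.Eventually.of_forall fun y => F'_bound t φ x y x (Metric.mem_ball_self one_pos)

lemma F_integrable (t : ℝ) (φ : SchwartzMap (EuclideanSpace ℝ (Fin d)) ℂ)
    (x : EuclideanSpace ℝ (Fin d)) :
    Integrable (fun y => K t x y * φ y) :=
  φ.integrable.bdd_mul (K_continuous t x).aestronglyMeasurable
    (Filter.Eventually.of_forall fun y => le_of_eq (norm_K t x y))

lemma key (t : ℝ) (ht : t ≠ 0) (φ : SchwartzMap (EuclideanSpace ℝ (Fin d)) ℂ)
    (x₀ : EuclideanSpace ℝ (Fin d)) :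
    HasFDerivAt (fun x => ∫ y, K t x y * φ y) (∫ y, F' t (⇑φ) x₀ y) x₀ := by
  apply hasFDerivAt_integral_of_dominated_of_fderiv_le (s := Metric.ball x₀ 1) (Metric.ball_mem_nhds x₀ one_pos)
  · exact Filter.Eventually.of_forall fun x =>
      ((K_continuous t x).mul φ.continuous).aestronglyMeasurable
  · exact F_integrable t φ x₀
  · exact (F'_continuous t φ x₀).aestronglyMeasurable
  · exact Filter.Eventually.of_forall fun y x hx => F'_bound t φ x₀ y x hx
  · exact bound_integrable t φ x₀
  · exact Filter.Eventually.of_forall fun y x _ => hasFDerivAt_F t ht (⇑φ) y x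

end SchrodAux

open SchrodAux in
/-- **Conjugation identity `e^{itΔ} x e^{-itΔ} = J(t) = x + 2it∇`.** For `d ≥ 1`, `t ≠ 0`
and Schwartz `φ`: `e^{itΔ}φ` is differentiable, and for every coordinate `j` and every `x`,
`(e^{itΔ}(y_j φ))(x) = x_j (e^{itΔ}φ)(x) + 2it ∂_{x_j}(e^{itΔ}φ)(x)`. -/
theorem propagator_J_conjugation (d : ℕ) (hd : 1 ≤ d) (t : ℝ) (ht : t ≠ 0)
    (φ : SchwartzMap (EuclideanSpace ℝ (Fin d)) ℂ) :
    Differentiable ℝ (schrod d t ⇑φ) ∧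
      ∀ (j : Fin d) (x : EuclideanSpace ℝ (Fin d)),
        schrod d t (fun y => (y j : ℂ) * φ y) x =
          (x j : ℂ) * schrod d t (⇑φ) x +
            2 * Complex.I * (t : ℂ) *
              fderiv ℝ (schrod d t ⇑φ) x (EuclideanSpace.single j 1) := by
  set Cst : ℂ := (((4 * Real.pi * t : ℝ) : ℂ) * Complex.I) ^ (-(d : ℂ) / 2) with hCst
  have hD : ∀ x, HasFDerivAt (schrod d t ⇑φ)
      (Cst • ∫ y, F' t (⇑φ) x y) x := by
    intro x
    exact (key t ht φ x).const_mul Cst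
  refine ⟨fun x => (hD x).differentiableAt, fun j x => ?_⟩
  rw [(hD x).fderiv, ContinuousLinearMap.smul_apply,
    ContinuousLinearMap.integral_apply (F'_integrable t φ x) _, smul_eq_mul]
  have happ : ∀ y : EuclideanSpace ℝ (Fin d),
      F' t (⇑φ) x y (EuclideanSpace.single j 1) =
        Complex.I / (2 * (t : ℂ)) * ((x j - y j : ℝ) : ℂ) * (K t x y * φ y) := by
    intro y
    rw [F', ContinuousLinearMap.smul_apply, M_apply,
      EuclideanSpace.inner_single_right]
    simp only [starRingEnd_apply, star_trivial, smul_eq_mul]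
    have : (x - y) j = x j - y j := rfl
    rw [this]
    push_cast
    ring
  simp only [happ]
  have hg : Integrable (fun y => K t x y * φ y) := F_integrable t φ x
  have hφ2 : Integrable (fun y : EuclideanSpace ℝ (Fin d) => (y j : ℂ) * φ y) := by
    refine (by simpa using φ.integrable_pow_mul volume 1 :
      Integrable fun y : EuclideanSpace ℝ (Fin d) => ‖y‖ * ‖φ y‖).mono'
      ((Complex.continuous_ofReal.comp (PiLp.continuous_apply 2 _ j)).mul
        φ.continuous).aestronglyMeasurable ?_
    refine Filter.Eventually.of_forall fun y => ?_
    show ‖(y j : ℂ) * φ y‖ ≤ ‖y‖ * ‖φ y‖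
    simp only [norm_mul, Complex.norm_real, Real.norm_eq_abs]
    refine mul_le_mul_of_nonneg_right ?_ (norm_nonneg _)
    have h := abs_real_inner_le_norm y (EuclideanSpace.single j (1 : ℝ))
    simpa [EuclideanSpace.inner_single_right] using h
  have hg2 : Integrable (fun y => (y j : ℂ) * (K t x y * φ y)) := by
    have := hφ2.bdd_mul (K_continuous t x).aestronglyMeasurable
      (Filter.Eventually.of_forall fun y => le_of_eq (norm_K t x y))
    refine this.congr (Filter.Eventually.of_forall fun y => ?_)
    ring
  -- transform the integrals
  have hL : schrod d t (fun y => (y j : ℂ) * φ y) x =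
      Cst * ∫ y, (y j : ℂ) * (K t x y * φ y) := by
    rw [schrod]
    congr 1
    exact integral_congr_ae (Filter.Eventually.of_forall fun y => by simp only [K]; ring)
  have hR : schrod d t (⇑φ) x = Cst * ∫ y, K t x y * φ y := rfl
  rw [hL, hR]
  have hsplit : ∫ y, Complex.I / (2 * (t : ℂ)) * ((x j - y j : ℝ) : ℂ) * (K t x y * φ y) =
      Complex.I / (2 * (t : ℂ)) *
        ((x j : ℂ) * (∫ y, K t x y * φ y) - ∫ y, (y j : ℂ) * (K t x y * φ y)) := by
    calc ∫ y, Complex.I / (2 * (t : ℂ)) * ((x j - y j : ℝ) : ℂ) * (K t x y * φ y)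
        = ∫ y, Complex.I / (2 * (t : ℂ)) *
            ((x j : ℂ) * (K t x y * φ y) - (y j : ℂ) * (K t x y * φ y)) :=
          integral_congr_ae (Filter.Eventually.of_forall fun y => by push_cast; ring)
      _ = Complex.I / (2 * (t : ℂ)) *
            ∫ y, ((x j : ℂ) * (K t x y * φ y) - (y j : ℂ) * (K t x y * φ y)) :=
          integral_const_mul _ _
      _ = Complex.I / (2 * (t : ℂ)) *
            ((∫ y, (x j : ℂ) * (K t x y * φ y)) - ∫ y, (y j : ℂ) * (K t x y * φ y)) := by
          rw [integral_sub (hg.const_mul _) hg2]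
      _ = Complex.I / (2 * (t : ℂ)) *
            ((x j : ℂ) * (∫ y, K t x y * φ y) - ∫ y, (y j : ℂ) * (K t x y * φ y)) := by
          rw [integral_const_mul]
  rw [hsplit]
  have h2t : (2 * (t : ℂ)) ≠ 0 := by simp [Complex.ofReal_ne_zero, ht]
  have hc : 2 * Complex.I * (t : ℂ) * (Complex.I / (2 * (t : ℂ))) = -1 := by
    field_simp
    rw [Complex.I_sq, neg_one_mul, neg_div, div_self (Complex.ofReal_ne_zero.mpr ht)]
  linear_combination (-(Cst * ((x j : ℂ) * (∫ y, K t x y * φ y) -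
    ∫ y, (y j : ℂ) * (K t x y * φ y)))) * hc
end
end

section
/- Let C > 0 and let (a_j)_{j≥0} be a sequence of strictly positive real numbers such that for every integer N ≥ 2, a_N ≤ C · ∑ a_j a_k a_ℓ, where the sum ranges over all ordered triples (j,k,ℓ) of nonnegative integers with j + k + ℓ = N and j,k,ℓ ≤ N−1. Then there exist constants C₀, C₁ > 0, depending only on C and a₀, such that a_N ≤ C₁ (C₀ a₁)^N for all N ≥ 1. -/
/-!
Take `C₁ = D` small and `C₀ = 4 / D`. Rescaling `a j` to `a j / (C₀ a₁) ^ j` preserves the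
hypothesis, because `j + k + ℓ = N` makes it homogeneous, and turns `a₁` into `D / 4`. The
rescaled sequence satisfies `a n ≤ D / (n + 1) ^ 2` by strong induction. The cubic convolution
of `(j + 1)⁻²` is at most `108 (N + 1)⁻²`: in each triple the largest index is at least `N / 3`,
and the remaining two factors sum to at most `(∑ (j + 1)⁻²)² ≤ 4`. Since every index is below
`N`, at most one of the three factors is `a₀`, so the induction closes once `108 C a₀ D ≤ 1`.
-/

open Finset

lemma sum_comp_le_sum_of_injOn {ι κ M : Type*} [AddCommMonoid M] [PartialOrder M]
    [IsOrderedAddMonoid M] {s : Finset ι} {t : Finset κ} {f : κ → M} (e : ι → κ)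
    (he : Set.InjOn e s) (hst : ∀ i ∈ s, e i ∈ t) (hf : ∀ q ∈ t, 0 ≤ f q) :
    ∑ i ∈ s, f (e i) ≤ ∑ q ∈ t, f q := by
  classical
  rw [← sum_image he]
  exact sum_le_sum_of_subset_of_nonneg (image_subset_iff.mpr hst) fun q hq _ => hf q hq

noncomputable def invSqSucc (j : ℕ) : ℝ := (((j : ℝ) + 1) ^ 2)⁻¹

lemma invSqSucc_pos (j : ℕ) : 0 < invSqSucc j := by unfold invSqSucc; positivity

lemma invSqSucc_le_one (j : ℕ) : invSqSucc j ≤ 1 :=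
  inv_le_one_of_one_le₀ (one_le_pow₀ (by simp))

lemma invSqSucc_le_nine_mul {m N : ℕ} (h : N ≤ 3 * m) : invSqSucc m ≤ 9 * invSqSucc N := by
  have h' : (N : ℝ) + 1 ≤ 3 * ((m : ℝ) + 1) := by
    have : (N : ℝ) ≤ 3 * m := by exact_mod_cast h
    linarith
  unfold invSqSucc
  rw [← div_eq_mul_inv, le_div_iff₀ (by positivity), inv_mul_le_iff₀ (by positivity)]
  nlinarith

def triples (N : ℕ) : Finset (ℕ × ℕ × ℕ) :=
  (range N ×ˢ range N ×ˢ range N).filter (fun p => p.1 + p.2.1 + p.2.2 = N)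

@[simp]
lemma mem_triples {N : ℕ} {p : ℕ × ℕ × ℕ} :
    p ∈ triples N ↔ p.1 < N ∧ p.2.1 < N ∧ p.2.2 < N ∧ p.1 + p.2.1 + p.2.2 = N := by
  simp [triples, and_assoc]

lemma sum_range_invSqSucc_le_two (n : ℕ) : ∑ j ∈ range n, invSqSucc j ≤ 2 := by
  have h := sum_Ioo_inv_sq_le (α := ℝ) 0 (n + 1)
  rw [← Ico_add_one_left_eq_Ioo, sum_Ico_eq_sum_range] at h
  simpa [invSqSucc, add_comm] using h

lemma sum_triples_invSqSucc_mul_le_four (N : ℕ) (π : ℕ × ℕ × ℕ → ℕ × ℕ)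
    (hinj : Set.InjOn π (triples N)) (hmaps : ∀ p ∈ triples N, π p ∈ range N ×ˢ range N) :
    ∑ p ∈ triples N, invSqSucc (π p).1 * invSqSucc (π p).2 ≤ 4 := by
  have hsum := sum_range_invSqSucc_le_two N
  calc ∑ p ∈ triples N, invSqSucc (π p).1 * invSqSucc (π p).2
      ≤ ∑ q ∈ range N ×ˢ range N, invSqSucc q.1 * invSqSucc q.2 :=
        sum_comp_le_sum_of_injOn π hinj hmaps
          fun q _ => (mul_pos (invSqSucc_pos q.1) (invSqSucc_pos q.2)).le
    _ = (∑ j ∈ range N, invSqSucc j) ^ 2 := by rw [sum_product, sq, sum_mul_sum]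
    _ ≤ 2 ^ 2 := by gcongr; exact sum_nonneg fun j _ => (invSqSucc_pos j).le
    _ = 4 := by norm_num

lemma invSqSucc_mul_le {i j k N : ℕ} (h : i + j + k = N) :
    invSqSucc i * invSqSucc j * invSqSucc k ≤ 9 * invSqSucc N *
      (invSqSucc j * invSqSucc k + invSqSucc i * invSqSucc k + invSqSucc i * invSqSucc j) := by
  have hi := invSqSucc_pos i
  have hj := invSqSucc_pos j
  have hk := invSqSucc_pos k
  rcases (by omega : N ≤ 3 * i ∨ N ≤ 3 * j ∨ N ≤ 3 * k) with hN | hN | hN <;>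
  · have := invSqSucc_le_nine_mul hN
    nlinarith [mul_pos hi hj, mul_pos hj hk, mul_pos hi hk, invSqSucc_pos N]

lemma sum_triples_invSqSucc_le (N : ℕ) :
    ∑ p ∈ triples N, invSqSucc p.1 * invSqSucc p.2.1 * invSqSucc p.2.2 ≤ 108 * invSqSucc N := by
  have h₁ := sum_triples_invSqSucc_mul_le_four N (fun p => (p.2.1, p.2.2)) ?_ ?_
  have h₂ := sum_triples_invSqSucc_mul_le_four N (fun p => (p.1, p.2.2)) ?_ ?_
  have h₃ := sum_triples_invSqSucc_mul_le_four N (fun p => (p.1, p.2.1)) ?_ ?_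
  · have := invSqSucc_pos N
    calc ∑ p ∈ triples N, invSqSucc p.1 * invSqSucc p.2.1 * invSqSucc p.2.2
        ≤ ∑ p ∈ triples N, 9 * invSqSucc N * (invSqSucc p.2.1 * invSqSucc p.2.2
            + invSqSucc p.1 * invSqSucc p.2.2 + invSqSucc p.1 * invSqSucc p.2.1) :=
          sum_le_sum fun p hp => invSqSucc_mul_le (mem_triples.1 hp).2.2.2
      _ = 9 * invSqSucc N * (∑ p ∈ triples N, invSqSucc p.2.1 * invSqSucc p.2.2
            + ∑ p ∈ triples N, invSqSucc p.1 * invSqSucc p.2.2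
            + ∑ p ∈ triples N, invSqSucc p.1 * invSqSucc p.2.1) := by
          rw [← mul_sum, sum_add_distrib, sum_add_distrib]
      _ ≤ 9 * invSqSucc N * (4 + 4 + 4) := by gcongr
      _ = 108 * invSqSucc N := by ring
  -- on `triples N` any two coordinates determine the third
  all_goals first
    | rintro ⟨i, j, k⟩ hp ⟨i', j', k'⟩ hq h
      simp only [mem_coe, mem_triples, Prod.mk.injEq] at hp hq h ⊢
      omega
    | rintro ⟨i, j, k⟩ hp
      simp only [mem_triples, mem_product, mem_range] at hp ⊢
      omega

def CubicConvolutionBound (C : ℝ) (a : ℕ → ℝ) : Prop :=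
  ∀ N, 2 ≤ N → a N ≤ C * ∑ p ∈ triples N, a p.1 * a p.2.1 * a p.2.2

namespace CubicConvolutionBound

variable {C : ℝ} {a : ℕ → ℝ}

lemma mul_pow (h : CubicConvolutionBound C a) {r : ℝ} (hr : 0 ≤ r) :
    CubicConvolutionBound C (fun j => a j * r ^ j) := by
  intro N hN
  have factor : ∀ p ∈ triples N, a p.1 * r ^ p.1 * (a p.2.1 * r ^ p.2.1) * (a p.2.2 * r ^ p.2.2)
      = a p.1 * a p.2.1 * a p.2.2 * r ^ N := by
    intro p hp
    rw [← (mem_triples.1 hp).2.2.2, pow_add, pow_add]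
    ring
  rw [sum_congr rfl factor, ← sum_mul, ← mul_assoc]
  exact mul_le_mul_of_nonneg_right (h N hN) (pow_nonneg hr N)

lemma le_mul_invSqSucc (h : CubicConvolutionBound C a) (hC : 0 ≤ C) (ha : ∀ j, 0 ≤ a j)
    {A D : ℝ} (ha₀ : a 0 ≤ A) (ha₁ : a 1 ≤ D / 4) (hD : 0 ≤ D) (hDA : D ≤ A)
    (hCAD : 108 * C * A * D ≤ 1) : ∀ n, 1 ≤ n → a n ≤ D * invSqSucc n := by
  intro n
  induction n using Nat.strong_induction_on with
  | _ n ih =>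
  intro hn
  obtain rfl | hn : n = 1 ∨ 2 ≤ n := by omega
  · norm_num [invSqSucc]
    linarith
  set w : ℕ → ℝ := fun j => if j = 0 then A else D
  have hbound : ∀ j < n, a j ≤ w j * invSqSucc j := fun j hj => by
    rcases j.eq_zero_or_pos with rfl | hj0
    · simpa [w, invSqSucc] using ha₀
    · simpa [w, hj0.ne'] using ih j hj hj0
  have hterm : ∀ p ∈ triples n, a p.1 * a p.2.1 * a p.2.2
      ≤ A * D * D * (invSqSucc p.1 * invSqSucc p.2.1 * invSqSucc p.2.2) := by
    intro p hp
    obtain ⟨h1, h2, h3, hsum⟩ := mem_triples.1 hp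
    have hw : w p.1 * w p.2.1 * w p.2.2 ≤ A * D * D := by
      simp only [w]
      -- two vanishing indices would force the third one to be `n`
      split_ifs <;> first | omega | nlinarith
    have := invSqSucc_pos p.1
    have := invSqSucc_pos p.2.1
    have := invSqSucc_pos p.2.2
    calc a p.1 * a p.2.1 * a p.2.2
        ≤ w p.1 * invSqSucc p.1 * (w p.2.1 * invSqSucc p.2.1) * (w p.2.2 * invSqSucc p.2.2) := by
          have b₁ := hbound _ h1
          have b₂ := hbound _ h2
          have b₃ := hbound _ h3
          exact mul_le_mul (mul_le_mul b₁ b₂ (ha _) ((ha _).trans b₁)) b₃ (ha _)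
            (mul_nonneg ((ha _).trans b₁) ((ha _).trans b₂))
      _ = w p.1 * w p.2.1 * w p.2.2 * (invSqSucc p.1 * invSqSucc p.2.1 * invSqSucc p.2.2) := by
          ring
      _ ≤ A * D * D * (invSqSucc p.1 * invSqSucc p.2.1 * invSqSucc p.2.2) := by gcongr
  have hA : 0 ≤ A := hD.trans hDA
  calc a n ≤ C * ∑ p ∈ triples n, a p.1 * a p.2.1 * a p.2.2 := h n hn
    _ ≤ C * ∑ p ∈ triples n, A * D * D * (invSqSucc p.1 * invSqSucc p.2.1 * invSqSucc p.2.2) :=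
        mul_le_mul_of_nonneg_left (sum_le_sum hterm) hC
    _ ≤ C * (A * D * D * (108 * invSqSucc n)) := by
        rw [← mul_sum]
        gcongr
        exact sum_triples_invSqSucc_le n
    _ = 108 * C * A * D * (D * invSqSucc n) := by ring
    _ ≤ D * invSqSucc n := mul_le_of_le_one_left (mul_nonneg hD (invSqSucc_pos n).le) hCAD

end CubicConvolutionBound

/-- **Sequential Gronwall lemma.** Let `C > 0` and let `(a_j)` be a sequence of strictly
positive reals such that for every `N ≥ 2`,
`a_N ≤ C ∑_{j+k+ℓ = N, j,k,ℓ ≤ N-1} a_j a_k a_ℓ` (sum over ordered triples).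
Then there are `C₀, C₁ > 0`, depending only on `C` and `a₀`, with
`a_N ≤ C₁ (C₀ a₁)^N` for all `N ≥ 1`. -/
theorem sequential_gronwall (C a₀ : ℝ) (hC : 0 < C) (ha₀ : 0 < a₀) :
    ∃ C₀ > (0 : ℝ), ∃ C₁ > (0 : ℝ), ∀ a : ℕ → ℝ, a 0 = a₀ → (∀ j, 0 < a j) →
      (∀ N : ℕ, 2 ≤ N →
        a N ≤ C * ∑ p ∈ (Finset.range N ×ˢ Finset.range N ×ˢ Finset.range N).filter
            (fun p : ℕ × ℕ × ℕ => p.1 + p.2.1 + p.2.2 = N),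
          a p.1 * a p.2.1 * a p.2.2) →
      ∀ N : ℕ, 1 ≤ N → a N ≤ C₁ * (C₀ * a 1) ^ N := by
  obtain ⟨D, hD, hDa₀, hCa₀D⟩ : ∃ D > 0, D ≤ a₀ ∧ 108 * C * a₀ * D ≤ 1 := by
    refine ⟨min a₀ (108 * C * a₀)⁻¹, lt_min ha₀ (by positivity), min_le_left _ _, ?_⟩
    calc 108 * C * a₀ * min a₀ (108 * C * a₀)⁻¹ ≤ 108 * C * a₀ * (108 * C * a₀)⁻¹ := by
          gcongr; exact min_le_right _ _
      _ = 1 := mul_inv_cancel₀ (by positivity)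
  refine ⟨4 / D, by positivity, D, hD, fun a ha0 hpos hrec N hN => ?_⟩
  set B := 4 / D * a 1 with hB_def
  have hB : 0 < B := by have := hpos 1; positivity
  have ha₁ : a 1 * B⁻¹ ^ 1 = D / 4 := by
    have := hpos 1
    rw [pow_one, hB_def]
    field_simp
  have hscaled : a N * B⁻¹ ^ N ≤ D * invSqSucc N :=
    (CubicConvolutionBound.mul_pow hrec (inv_nonneg.2 hB.le)).le_mul_invSqSucc hC.le
      (fun j => by have := hpos j; positivity) (by simp [ha0]) ha₁.le hD.le hDa₀ hCa₀D N hN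
  calc a N = a N * B⁻¹ ^ N * B ^ N := by rw [inv_pow, inv_mul_cancel_right₀ (by positivity)]
    _ ≤ D * invSqSucc N * B ^ N := by gcongr
    _ ≤ D * B ^ N := by
        gcongr
        exact mul_le_of_le_one_right hD.le (invSqSucc_le_one N)
end
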